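/- Let n ≥ 1 be a natural number and let a : Fin n → ℝ satisfy a_i > 0 for all i (the boundary areas). Let A ≥ 0 be a real number (the Dirichlet energy ∫|∇v|²), let J : Fin n → ℝ satisfy J_i ≥ 0 with B := Σ_i √(π / a_i)·J_i > 0, and let I : Fin n → ℝ satisfy, for every real δ > 0 and every i, I_i ≥ (1 - δ⁻¹)·a_i + (1 - δ)·J_i. Let κ ∈ (0, 1] and η ∈ ℝ and suppose (3/8)·A + (κ/2)·Σ_i √(π / a_i)·I_i ≤ η·Σ_i √(π·a_i). Then, setting σ := A / (2·κ·B), one has η ≥ κ·σ / (2·(1 + σ)). -/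

import Mathlib

open Finset Real

lemma Real.sqrt_div_mul_eq_sqrt_mul (x : ℝ) {a : ℝ} (ha : 0 ≤ a) : √(x / a) * a = √(x * a) := by
  rcases ha.eq_or_lt with rfl | ha
  · simp
  rw [← sqrt_sq ha.le, ← sqrt_mul' _ (sq_nonneg a), sqrt_sq ha.le]
  congr 1
  field_simp

lemma Finset.mul_sum_add_mul_sum_le_sum {ι : Type*} (s : Finset ι) {w a J I : ι → ℝ} (c d : ℝ)
    (hw : ∀ i ∈ s, 0 ≤ w i) (hI : ∀ i ∈ s, c * a i + d * J i ≤ I i) :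
    c * ∑ i ∈ s, w i * a i + d * ∑ i ∈ s, w i * J i ≤ ∑ i ∈ s, w i * I i := by
  rw [mul_sum, mul_sum, ← sum_add_distrib]
  refine sum_le_sum fun i hi => ?_
  calc c * (w i * a i) + d * (w i * J i) = w i * (c * a i + d * J i) := by ring
    _ ≤ w i * I i := mul_le_mul_of_nonneg_left (hI i hi) (hw i hi)

/-- `S`, `B`, `P` stand for `∑ √(π aᵢ)`, `∑ √(π / aᵢ) Jᵢ` and `∑ √(π / aᵢ) Iᵢ`; `hP` is the
Young-inequality bound with parameter `δ = 1 + σ`. -/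
lemma le_of_energy_bound {A B P S κ σ η : ℝ} (hκ : 0 ≤ κ) (hS : 0 < S) (hσ : 0 ≤ σ) (hA : 0 ≤ A)
    (hAσ : 2 * κ * σ * B = A) (hP : (1 - (1 + σ)⁻¹) * S + (1 - (1 + σ)) * B ≤ P)
    (hQ : 3 / 8 * A + κ / 2 * P ≤ η * S) :
    κ * σ / (2 * (1 + σ)) ≤ η := by
  have hYoung : σ / (1 + σ) * S - σ * B ≤ P := by
    convert hP using 1
    field_simp
    ring
  -- the `-κσB/2 = -A/4` term absorbs part of the energy, leaving `A/8 ≥ 0`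
  have hkey : κ * σ / (2 * (1 + σ)) * S + A / 8 ≤ η * S := by
    have := mul_le_mul_of_nonneg_left hYoung (by positivity : 0 ≤ κ / 2)
    calc κ * σ / (2 * (1 + σ)) * S + A / 8
        = 3 / 8 * A + κ / 2 * (σ / (1 + σ) * S - σ * B) := by rw [← hAσ]; field_simp; ring
      _ ≤ η * S := by linarith
  exact le_of_mul_le_mul_right (by linarith) hS

theorem key_lower_bound_for_Q_general (n : ℕ)
    (a : Fin n → ℝ) (ha : ∀ i, 0 < a i)
    (A : ℝ) (hA : 0 ≤ A)
    (J : Fin n → ℝ)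
    (hB : 0 < ∑ i, Real.sqrt (Real.pi / a i) * J i)
    (I : Fin n → ℝ)
    (hI : ∀ δ : ℝ, 0 < δ → ∀ i, I i ≥ (1 - δ⁻¹) * a i + (1 - δ) * J i)
    (κ : ℝ) (hκ : κ ∈ Set.Ioc (0 : ℝ) 1) (η : ℝ)
    (hQ : (3 / 8) * A + (κ / 2) * ∑ i, Real.sqrt (Real.pi / a i) * I i ≤
      η * ∑ i, Real.sqrt (Real.pi * a i)) :
    η ≥ κ * (A / (2 * κ * ∑ i, Real.sqrt (Real.pi / a i) * J i)) /
        (2 * (1 + A / (2 * κ * ∑ i, Real.sqrt (Real.pi / a i) * J i))) := by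
  obtain ⟨hκ, -⟩ := hκ
  set B := ∑ i, √(π / a i) * J i
  set σ := A / (2 * κ * B)
  have hσ : 0 ≤ σ := by positivity
  have hS : 0 < ∑ i, √(π * a i) :=
    sum_pos (fun i _ => sqrt_pos.2 (mul_pos pi_pos (ha i))) (nonempty_of_sum_ne_zero hB.ne')
  have hP : (1 - (1 + σ)⁻¹) * ∑ i, √(π * a i) + (1 - (1 + σ)) * B ≤ ∑ i, √(π / a i) * I i := by
    simp_rw [← sqrt_div_mul_eq_sqrt_mul π (ha _).le]
    exact mul_sum_add_mul_sum_le_sum _ _ _ (fun _ _ => sqrt_nonneg _)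
      fun i _ => hI (1 + σ) (by positivity) i
  refine le_of_energy_bound hκ.le hS hσ hA ?_ hP hQ
  simp only [σ]
  field_simp

theorem key_lower_bound_for_Q (n : ℕ) (hn : 1 ≤ n)
    (a : Fin n → ℝ) (ha : ∀ i, 0 < a i)
    (A : ℝ) (hA : 0 ≤ A)
    (J : Fin n → ℝ) (hJ : ∀ i, 0 ≤ J i)
    (hB : 0 < ∑ i, Real.sqrt (Real.pi / a i) * J i)
    (I : Fin n → ℝ)
    (hI : ∀ δ : ℝ, 0 < δ → ∀ i, I i ≥ (1 - δ⁻¹) * a i + (1 - δ) * J i)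
    (κ : ℝ) (hκ : κ ∈ Set.Ioc (0 : ℝ) 1) (η : ℝ)
    (hQ : (3 / 8) * A + (κ / 2) * ∑ i, Real.sqrt (Real.pi / a i) * I i ≤
      η * ∑ i, Real.sqrt (Real.pi * a i)) :
    η ≥ κ * (A / (2 * κ * ∑ i, Real.sqrt (Real.pi / a i) * J i)) /
        (2 * (1 + A / (2 * κ * ∑ i, Real.sqrt (Real.pi / a i) * J i))) :=
  key_lower_bound_for_Q_general n a ha A hA J hB I hI κ hκ η hQ
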